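/- Suppose F, G : ℝ² → ℝ (in variables (s,α), α > 0) satisfy F(s,α) = −cα² + O(α^{5/2}) + O(s) and G(s,α) = O(α^{5/2}) − c₂s + o(s) as (s,α) → 0, with c, c₂ > 0, and for each fixed small α the map s ↦ G(s,α) is continuous. Then for any m with 2 < m < 5/2 and all sufficiently small α > 0, there exists s with |s| < α^m such that G(s,α) = 0 and F(s,α) < 0. -/

import Mathlib

/-! On the scale `|s| < t := α ^ m` the linear term `-c₂ s` of `G` dominates both `O(α^{5/2})`
(as `m < 5/2`) and the `o(s)` remainder, so `G(·, α)` changes sign on `[-t, t]` and has a zero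
there. At such a zero `|s| < α ^ m = o(α²)` (as `m > 2`), so `F(s, α) = -cα² + o(α²) < 0`. -/

open Filter Topology

lemma exists_forall_lt_of_eventually_nhdsGT {X : Type*} [TopologicalSpace X] [LinearOrder X]
    [OrderTopology X] [NoMaxOrder X] {a : X} {P : X → Prop} (h : ∀ᶠ x in 𝓝[>] a, P x) :
    ∃ u, a < u ∧ ∀ x, a < x → x < u → P x := by
  obtain ⟨u, hu, hsub⟩ := mem_nhdsGT_iff_exists_Ioo_subset.1 h
  exact ⟨u, hu, fun x hax hxu => hsub ⟨hax, hxu⟩⟩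

lemma tendsto_rpow_nhdsGT_zero_nhds_zero {p : ℝ} (hp : 0 < p) :
    Tendsto (fun α : ℝ => α ^ p) (𝓝[>] 0) (𝓝 0) := by
  have h := (Real.continuousAt_rpow_const 0 p (Or.inr hp.le)).tendsto
  rw [Real.zero_rpow hp.ne'] at h
  exact h.mono_left nhdsWithin_le_nhds

lemma eventually_mul_rpow_lt_mul_rpow {p q : ℝ} (hpq : p < q) (C : ℝ) {K : ℝ} (hK : 0 < K) :
    ∀ᶠ α in 𝓝[>] (0 : ℝ), C * α ^ q < K * α ^ p := by
  have hsmall : ∀ᶠ α in 𝓝[>] (0 : ℝ), C * α ^ (q - p) < K := by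
    have h := (tendsto_rpow_nhdsGT_zero_nhds_zero (sub_pos.2 hpq)).const_mul C
    rw [mul_zero] at h
    exact h.eventually (eventually_lt_nhds hK)
  filter_upwards [hsmall, self_mem_nhdsWithin] with α hα (hα0 : 0 < α)
  calc C * α ^ q = C * α ^ (q - p) * α ^ p := by
        rw [mul_assoc, ← Real.rpow_add hα0, sub_add_cancel]
    _ < K * α ^ p := mul_lt_mul_of_pos_right hα (Real.rpow_pos_of_pos hα0 p)

lemma exists_abs_lt_eq_zero_of_neg_of_pos {g : ℝ → ℝ} (hg : Continuous g) {t : ℝ} (ht : 0 ≤ t)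
    (hgt : g t < 0) (hgnt : 0 < g (-t)) : ∃ s, |s| < t ∧ g s = 0 := by
  obtain ⟨s, hs, hgs⟩ :=
    intermediate_value_Ioo' (by linarith) hg.continuousOn (Set.mem_Ioo.2 ⟨hgt, hgnt⟩)
  exact ⟨s, abs_lt.2 hs, hgs⟩

lemma exists_abs_lt_eq_zero_of_perturbed_linear {g r : ℝ → ℝ} {e a t : ℝ} (hg : Continuous g)
    (hgdef : ∀ s, g s = e - a * s + r s) (ht : 0 ≤ t) (he : |e| < a / 2 * t)
    (hrt : |r t| ≤ a / 2 * t) (hrnt : |r (-t)| ≤ a / 2 * t) : ∃ s, |s| < t ∧ g s = 0 := by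
  have he' := abs_lt.1 he
  refine exists_abs_lt_eq_zero_of_neg_of_pos hg ht ?_ ?_ <;> rw [hgdef]
  · linarith [(abs_le.1 hrt).2]
  · linarith [(abs_le.1 hrnt).1]

/-- Abstract intermediate-value/parameter-matching argument concluding the proof of the
main theorem: if `F(s,α) = −cα² + O(α^{5/2}) + O(s)` and
`G(s,α) = O(α^{5/2}) − c₂s + o(s)` with `c, c₂ > 0`, and `s ↦ G(s,α)` is continuous,
then for any `2 < m < 5/2` and all sufficiently small `α > 0` there is `s` with
`|s| < α^m`, `G(s,α) = 0` and `F(s,α) < 0`. -/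
theorem parameter_matching (F G : ℝ → ℝ → ℝ) (c c₂ : ℝ) (hc : 0 < c) (hc₂ : 0 < c₂)
    (E R : ℝ → ℝ)
    (hGdef : ∀ s α, G s α = E α - c₂ * s + R s)
    (hE : ∃ C δ : ℝ, 0 < C ∧ 0 < δ ∧ ∀ α : ℝ, 0 < α → α < δ →
      |E α| ≤ C * α ^ ((5:ℝ)/2))
    (hR : ∀ ε : ℝ, 0 < ε → ∃ δ : ℝ, 0 < δ ∧ ∀ s : ℝ, |s| < δ → |R s| ≤ ε * |s|)
    (hF : ∃ C δ : ℝ, 0 < C ∧ 0 < δ ∧ ∀ s α : ℝ, 0 < α → α < δ → |s| < δ →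
      |F s α + c * α ^ 2| ≤ C * (α ^ ((5:ℝ)/2) + |s|))
    (hGcont : ∀ α : ℝ, Continuous fun s => G s α) :
    ∀ m : ℝ, 2 < m → m < 5/2 →
      ∃ α₀ : ℝ, 0 < α₀ ∧ ∀ α : ℝ, 0 < α → α < α₀ →
        ∃ s : ℝ, |s| < α ^ m ∧ G s α = 0 ∧ F s α < 0 := by
  intro m hm2 hm52
  obtain ⟨CE, δE, -, hδE, hEbd⟩ := hE
  obtain ⟨δR, hδR, hRbd⟩ := hR (c₂ / 2) (half_pos hc₂)
  obtain ⟨CF, δF, hCF, hδF, hFbd⟩ := hF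
  have hscale := tendsto_rpow_nhdsGT_zero_nhds_zero (p := m) (by linarith)
  have hnear (δ : ℝ) (hδ : 0 < δ) : ∀ᶠ α in 𝓝[>] (0 : ℝ), α < δ :=
    (eventually_lt_nhds hδ).filter_mono nhdsWithin_le_nhds
  apply exists_forall_lt_of_eventually_nhdsGT
  filter_upwards [self_mem_nhdsWithin, hnear δE hδE, hnear δF hδF,
    hscale.eventually (eventually_lt_nhds hδR), hscale.eventually (eventually_lt_nhds hδF),
    eventually_mul_rpow_lt_mul_rpow hm52 CE (half_pos hc₂),
    eventually_mul_rpow_lt_mul_rpow (by norm_num : (2 : ℝ) < 5 / 2) CF (by positivity : 0 < c / 4),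
    eventually_mul_rpow_lt_mul_rpow hm2 CF (by positivity : 0 < c / 4)]
    with α (hα : 0 < α) hαE hαF htR htF hEt hFα hFt
  set t := α ^ m
  have ht : 0 < t := Real.rpow_pos_of_pos hα m
  obtain ⟨s, hs, hGs⟩ := exists_abs_lt_eq_zero_of_perturbed_linear (hGcont α) (hGdef · α) ht.le
    ((hEbd α hα hαE).trans_lt hEt)
    (by simpa [abs_of_pos ht] using hRbd t (by rwa [abs_of_pos ht]))
    (by simpa [abs_of_pos ht] using hRbd (-t) (by rwa [abs_neg, abs_of_pos ht]))
  refine ⟨s, hs, hGs, ?_⟩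
  rw [Real.rpow_two] at hFα hFt
  have hFs := le_of_abs_le (hFbd s α hα hαF (hs.trans htF))
  linarith [mul_le_mul_of_nonneg_left hs.le hCF.le, mul_pos hc (pow_pos hα 2)]
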